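/- arXiv:2510.22451 — 3 statements merged into one kernel-verified Lean document; each statement's English description precedes it below -/
import Mathlib

section
/- Let G1 and G2 be independent real-valued random variables on a probability space, each distributed according to the standard Gumbel distribution Gumbel(0,1). Then for every real number p with 0 < p < 1, the probability of the event {G1 - G2 + log(p/(1-p)) ≥ 0} equals p. -/
open MeasureTheory ProbabilityTheory
open Real Set Filter Topology

/-- The standard Gumbel distribution `Gumbel(0,1)`: the measure on `ℝ` with density
`x ↦ exp (-x - exp (-x))` with respect to Lebesgue measure. -/
noncomputable def stdGumbel : Measure ℝ :=
  (volume : Measure ℝ).withDensity fun x => ENNReal.ofReal (Real.exp (-x - Real.exp (-x)))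

section Aux

lemma aux_deriv (a : ℝ) (ha : 0 < a) (x : ℝ) :
    HasDerivAt (fun x => Real.exp (-a * Real.exp (-x)) / a)
      (Real.exp (-x) * Real.exp (-a * Real.exp (-x))) x := by
  have h1 : HasDerivAt (fun x : ℝ => -a * Real.exp (-x)) (a * Real.exp (-x)) x := by
    have := ((hasDerivAt_neg x).exp).const_mul (-a)
    refine this.congr_deriv ?_
    ring
  have h2 := h1.exp.div_const a
  refine h2.congr_deriv ?_
  field_simp

lemma aux_bound (a : ℝ) (ha : 0 < a) (x : ℝ) :
    Real.exp (-x) * Real.exp (-a * Real.exp (-x)) ≤ 4 / a ^ 2 * Real.exp x := by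
  set t := Real.exp (-x) with ht
  have htpos : 0 < t := Real.exp_pos _
  have hat : 0 < a * t := mul_pos ha htpos
  have h1 : a * t / 2 + 1 ≤ Real.exp (a * t / 2) := Real.add_one_le_exp _
  have h2 : (a * t) ^ 2 / 4 ≤ Real.exp (a * t) := by
    have hsq : Real.exp (a * t) = Real.exp (a * t / 2) ^ 2 := by
      rw [sq, ← Real.exp_add]; ring_nf
    nlinarith [Real.exp_pos (a * t / 2)]
  have hxinv : Real.exp x = t⁻¹ := by
    rw [ht, Real.exp_neg, inv_inv]
  have hneg : Real.exp (-a * Real.exp (-x)) = (Real.exp (a * t))⁻¹ := by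
    rw [← ht, ← Real.exp_neg]; ring_nf
  rw [hxinv, hneg]
  rw [mul_inv_le_iff₀ (Real.exp_pos _), mul_comm (4 / a ^ 2) t⁻¹, mul_assoc]
  have h3 : t ^ 2 ≤ 4 / a ^ 2 * Real.exp (a * t) := by
    have hm := mul_le_mul_of_nonneg_left h2 (by positivity : (0:ℝ) ≤ 4 / a ^ 2)
    calc t ^ 2 = 4 / a ^ 2 * ((a * t) ^ 2 / 4) := by field_simp
    _ ≤ _ := hm
  calc t = t⁻¹ * t ^ 2 := by field_simp [sq]
  _ ≤ t⁻¹ * (4 / a ^ 2 * Real.exp (a * t)) :=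
      mul_le_mul_of_nonneg_left h3 (by positivity)

lemma aux_integrable (a : ℝ) (ha : 0 < a) :
    Integrable (fun x => Real.exp (-x) * Real.exp (-a * Real.exp (-x))) := by
  have hcont : Continuous fun x => Real.exp (-x) * Real.exp (-a * Real.exp (-x)) := by
    continuity
  have hIic : IntegrableOn (fun x => Real.exp (-x) * Real.exp (-a * Real.exp (-x))) (Iic 0) := by
    refine Integrable.mono' ((integrableOn_exp_Iic 0).const_mul (4 / a ^ 2))
      hcont.aestronglyMeasurable.restrict ?_
    filter_upwards with x
    rw [Real.norm_eq_abs, abs_of_nonneg (by positivity)]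
    exact aux_bound a ha x
  have hIoi : IntegrableOn (fun x => Real.exp (-x) * Real.exp (-a * Real.exp (-x))) (Ioi 0) := by
    refine Integrable.mono' (exp_neg_integrableOn_Ioi 0 one_pos)
      hcont.aestronglyMeasurable.restrict ?_
    filter_upwards with x
    rw [Real.norm_eq_abs, abs_of_nonneg (by positivity)]
    calc Real.exp (-x) * Real.exp (-a * Real.exp (-x)) ≤ Real.exp (-x) * 1 := by
          apply mul_le_mul_of_nonneg_left _ (Real.exp_pos _).le
          rw [Real.exp_le_one_iff]
          have := (Real.exp_pos (-x)).le
          nlinarith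
    _ = Real.exp (-1 * x) := by rw [mul_one]; ring_nf
  rw [← integrableOn_univ, ← Set.Iic_union_Ioi (a := (0:ℝ))]
  exact hIic.union hIoi

lemma aux_tendsto_bot (a : ℝ) (ha : 0 < a) :
    Tendsto (fun x => Real.exp (-a * Real.exp (-x)) / a) atBot (𝓝 0) := by
  have h1 : Tendsto (fun x : ℝ => Real.exp (-x)) atBot atTop :=
    Real.tendsto_exp_atTop.comp tendsto_neg_atBot_atTop
  have h2 : Tendsto (fun x : ℝ => -a * Real.exp (-x)) atBot atBot := by
    exact Tendsto.const_mul_atTop_of_neg (neg_neg_iff_pos.mpr ha) h1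
  have h3 := Real.tendsto_exp_atBot.comp h2
  simpa using h3.div_const a

lemma aux_tendsto_top (a : ℝ) (ha : 0 < a) :
    Tendsto (fun x => Real.exp (-a * Real.exp (-x)) / a) atTop (𝓝 (1 / a)) := by
  have h1 : Tendsto (fun x : ℝ => -a * Real.exp (-x)) atTop (𝓝 0) := by
    have := Real.tendsto_exp_neg_atTop_nhds_zero.const_mul (-a)
    simpa using this
  have h2 := (Real.continuous_exp.tendsto 0).comp h1
  simpa using h2.div_const a

lemma aux_integral (a : ℝ) (ha : 0 < a) :
    ∫ x, Real.exp (-x) * Real.exp (-a * Real.exp (-x)) = 1 / a := by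
  have := integral_of_hasDerivAt_of_tendsto (f := fun x => Real.exp (-a * Real.exp (-x)) / a)
    (fun x => aux_deriv a ha x) (aux_integrable a ha) (aux_tendsto_bot a ha)
    (aux_tendsto_top a ha)
  simpa using this

lemma aux_integral_Iic (a : ℝ) (ha : 0 < a) (t : ℝ) :
    ∫ x in Iic t, Real.exp (-x) * Real.exp (-a * Real.exp (-x))
      = Real.exp (-a * Real.exp (-t)) / a := by
  have := integral_Iic_of_hasDerivAt_of_tendsto (a := t)
    (f := fun x => Real.exp (-a * Real.exp (-x)) / a)
    ((aux_deriv a ha t).continuousAt.continuousWithinAt)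
    (fun x _ => aux_deriv a ha x) ((aux_integrable a ha).integrableOn)
    (aux_tendsto_bot a ha)
  simpa using this

end Aux

lemma stdGumbel_density_eq (x : ℝ) :
    Real.exp (-x - Real.exp (-x)) = Real.exp (-x) * Real.exp (-1 * Real.exp (-x)) := by
  rw [← Real.exp_add]; ring_nf

lemma stdGumbel_Iic (t : ℝ) :
    stdGumbel (Iic t) = ENNReal.ofReal (Real.exp (-Real.exp (-t))) := by
  rw [stdGumbel, withDensity_apply _ measurableSet_Iic]
  simp only [stdGumbel_density_eq]
  rw [← ofReal_integral_eq_lintegral_ofReal ((aux_integrable 1 one_pos).integrableOn)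
    (Filter.Eventually.of_forall fun x => by positivity), aux_integral_Iic 1 one_pos t]
  norm_num

instance : IsProbabilityMeasure stdGumbel := by
  constructor
  rw [stdGumbel, withDensity_apply _ MeasurableSet.univ, Measure.restrict_univ]
  simp only [stdGumbel_density_eq]
  rw [← ofReal_integral_eq_lintegral_ofReal (aux_integrable 1 one_pos)
    (Filter.Eventually.of_forall fun x => by positivity), aux_integral 1 one_pos]
  norm_num


/-- If `G1` and `G2` are independent standard Gumbel random variables, then for every
`p ∈ (0,1)` the probability of `{G1 - G2 + log (p/(1-p)) ≥ 0}` is `p`. -/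
theorem gumbel_diff_logit_prob {Ω : Type*} [MeasurableSpace Ω] (μ : Measure Ω)
    [IsProbabilityMeasure μ] (G1 G2 : Ω → ℝ) (hG1 : Measurable G1) (hG2 : Measurable G2)
    (hindep : IndepFun G1 G2 μ)
    (hlaw1 : Measure.map G1 μ = stdGumbel) (hlaw2 : Measure.map G2 μ = stdGumbel)
    (p : ℝ) (hp0 : 0 < p) (hp1 : p < 1) :
    μ {ω | G1 ω - G2 ω + Real.log (p / (1 - p)) ≥ 0} = ENNReal.ofReal p := by
  set c := Real.log (p / (1 - p)) with hc
  have h1p : 0 < 1 - p := by linarith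
  have hq : 0 < p / (1 - p) := by positivity
  have hec : Real.exp (-c) = (1 - p) / p := by
    rw [hc, Real.exp_neg, Real.exp_log hq, inv_div]
  have hap : (0:ℝ) < 1 / p := by positivity
  set S : Set (ℝ × ℝ) := {q : ℝ × ℝ | q.2 ≤ q.1 + c} with hSdef
  have hS : MeasurableSet S := measurableSet_le measurable_snd (measurable_fst.add_const c)
  have hset : {ω | G1 ω - G2 ω + c ≥ 0} = (fun ω => (G1 ω, G2 ω)) ⁻¹' S := by
    ext ω
    simp only [hSdef, Set.mem_setOf_eq, Set.mem_preimage, ge_iff_le]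
    constructor <;> intro h <;> linarith
  have hmap : Measure.map (fun ω => (G1 ω, G2 ω)) μ = stdGumbel.prod stdGumbel := by
    rw [(indepFun_iff_map_prod_eq_prod_map_map hG1.aemeasurable hG2.aemeasurable).mp hindep,
      hlaw1, hlaw2]
  rw [hset, ← Measure.map_apply (hG1.prodMk hG2) hS, hmap, Measure.prod_apply hS]
  have hpre : ∀ x : ℝ, stdGumbel (Prod.mk x ⁻¹' S) =
      ENNReal.ofReal (Real.exp (-Real.exp (-(x + c)))) := by
    intro x
    rw [show Prod.mk x ⁻¹' S = Iic (x + c) from rfl, stdGumbel_Iic]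
  have hm1 : Measurable fun x : ℝ => ENNReal.ofReal (Real.exp (-x - Real.exp (-x))) :=
    (by continuity : Continuous fun x : ℝ => Real.exp (-x - Real.exp (-x))).measurable.ennreal_ofReal
  have hm2 : Measurable fun x : ℝ => ENNReal.ofReal (Real.exp (-Real.exp (-(x + c)))) :=
    (by continuity : Continuous fun x : ℝ => Real.exp (-Real.exp (-(x + c)))).measurable.ennreal_ofReal
  rw [lintegral_congr hpre, stdGumbel, lintegral_withDensity_eq_lintegral_mul _ hm1 hm2]
  have hpt : ∀ x : ℝ, ENNReal.ofReal (Real.exp (-x - Real.exp (-x))) *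
      ENNReal.ofReal (Real.exp (-Real.exp (-(x + c)))) =
      ENNReal.ofReal (Real.exp (-x) * Real.exp (-(1/p) * Real.exp (-x))) := by
    intro x
    rw [← ENNReal.ofReal_mul (Real.exp_pos _).le, ← Real.exp_add, ← Real.exp_add]
    congr 1
    have he : Real.exp (-(x + c)) = Real.exp (-x) * ((1 - p) / p) := by
      rw [neg_add, Real.exp_add, hec]
    rw [he]
    field_simp
    ring
  calc ∫⁻ x, ENNReal.ofReal (Real.exp (-x - Real.exp (-x))) *
        ENNReal.ofReal (Real.exp (-Real.exp (-(x + c))))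
      = ∫⁻ x, ENNReal.ofReal (Real.exp (-x) * Real.exp (-(1/p) * Real.exp (-x))) :=
        lintegral_congr hpt
    _ = ENNReal.ofReal (∫ x, Real.exp (-x) * Real.exp (-(1/p) * Real.exp (-x))) :=
        (ofReal_integral_eq_lintegral_ofReal (aux_integrable (1/p) hap)
          (Filter.Eventually.of_forall fun x => by positivity)).symm
    _ = ENNReal.ofReal p := by rw [aux_integral (1/p) hap, one_div_one_div]
end

section
/- For every real number p with 0 < p < 1, the Lebesgue integral over ℝ of the function x ↦ exp(-exp(-(x - log(1-p)))) · exp(-(x - log p) - exp(-(x - log p))) equals p. -/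
/-!
Writing `F μ` and `f μ` for the Gumbel(μ, 1) distribution function and density, one has
`f μ x = e^μ e^{-x} F μ x`, and the family is max-stable: `F a * F b = F c` with
`e^c = e^a + e^b`. Hence `F a * f b = (e^b / e^c) f c` pointwise, and since `f c` integrates
to `1` (it is the derivative of `F c`, which increases from `0` to `1`), the integral is
`e^b / (e^a + e^b)`. For `a = log (1 - p)` and `b = log p` this is `p`.
-/

open MeasureTheory Filter Real Topology

theorem integrable_deriv_of_nonneg_of_tendsto {g g' : ℝ → ℝ} {m n : ℝ}
    (hderiv : ∀ x, HasDerivAt g (g' x) x) (hg' : ∀ x, 0 ≤ g' x)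
    (hbot : Tendsto g atBot (𝓝 m)) (htop : Tendsto g atTop (𝓝 n)) : Integrable g' := by
  have hcont : Continuous g := continuous_iff_continuousAt.2 fun x => (hderiv x).continuousAt
  have hint (a b : ℝ) : IntervalIntegrable g' volume a b :=
    intervalIntegral.intervalIntegrable_deriv_of_nonneg hcont.continuousOn
      (fun x _ => hderiv x) (fun x _ => hg' x)
  refine integrable_of_intervalIntegral_norm_tendsto (n - m) (fun i => (hint (-i) i).1)
    tendsto_neg_atTop_atBot tendsto_id ?_
  simp_rw [Real.norm_of_nonneg (hg' _),
    intervalIntegral.integral_eq_sub_of_hasDerivAt (fun x _ => hderiv x) (hint _ _)]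
  exact htop.sub (hbot.comp tendsto_neg_atTop_atBot)

noncomputable def gumbelCDF (μ x : ℝ) : ℝ := exp (-exp (-(x - μ)))

noncomputable def gumbelPDF (μ x : ℝ) : ℝ := exp (-(x - μ) - exp (-(x - μ)))

theorem gumbelPDF_nonneg (μ x : ℝ) : 0 ≤ gumbelPDF μ x := (exp_pos _).le

theorem hasDerivAt_gumbelCDF (μ x : ℝ) : HasDerivAt (gumbelCDF μ) (gumbelPDF μ x) x := by
  have hinner : HasDerivAt (fun x => -exp (-(x - μ))) (exp (-(x - μ))) x := by
    simpa using (((hasDerivAt_id x).sub_const μ).neg.exp).fun_neg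
  exact hinner.exp.congr_deriv (by rw [gumbelPDF, ← exp_add]; ring_nf)

theorem tendsto_gumbelCDF_atBot (μ : ℝ) : Tendsto (gumbelCDF μ) atBot (𝓝 0) :=
  tendsto_exp_atBot.comp <| tendsto_neg_atTop_atBot.comp <| tendsto_exp_atTop.comp <|
    tendsto_neg_atBot_atTop.comp <| tendsto_atBot_add_const_right _ _ tendsto_id

theorem tendsto_gumbelCDF_atTop (μ : ℝ) : Tendsto (gumbelCDF μ) atTop (𝓝 1) := by
  have h : Tendsto (fun x => exp (-(x - μ))) atTop (𝓝 0) :=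
    tendsto_exp_neg_atTop_nhds_zero.comp (tendsto_atTop_add_const_right _ (-μ) tendsto_id)
  have := (continuous_exp.tendsto _).comp h.neg
  rwa [neg_zero, exp_zero] at this

theorem integrable_gumbelPDF (μ : ℝ) : Integrable (gumbelPDF μ) :=
  integrable_deriv_of_nonneg_of_tendsto (hasDerivAt_gumbelCDF μ) (gumbelPDF_nonneg μ)
    (tendsto_gumbelCDF_atBot μ) (tendsto_gumbelCDF_atTop μ)

theorem integral_gumbelPDF (μ : ℝ) : ∫ x, gumbelPDF μ x = 1 := by
  rw [integral_of_hasDerivAt_of_tendsto (hasDerivAt_gumbelCDF μ) (integrable_gumbelPDF μ)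
    (tendsto_gumbelCDF_atBot μ) (tendsto_gumbelCDF_atTop μ), sub_zero]

theorem exp_neg_sub (x μ : ℝ) : exp (-(x - μ)) = exp μ * exp (-x) := by
  rw [neg_sub, sub_eq_add_neg, exp_add]

theorem gumbelPDF_eq_mul_gumbelCDF (μ x : ℝ) :
    gumbelPDF μ x = exp μ * exp (-x) * gumbelCDF μ x := by
  rw [gumbelPDF, gumbelCDF, sub_eq_add_neg, exp_add, exp_neg_sub]

theorem gumbelCDF_mul_gumbelCDF (a b x : ℝ) :
    gumbelCDF a x * gumbelCDF b x = gumbelCDF (log (exp a + exp b)) x := by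
  rw [gumbelCDF, gumbelCDF, gumbelCDF, ← exp_add, exp_neg_sub, exp_neg_sub, exp_neg_sub,
    exp_log (by positivity)]
  ring_nf

theorem gumbelCDF_mul_gumbelPDF (a b x : ℝ) :
    gumbelCDF a x * gumbelPDF b x =
      exp b / (exp a + exp b) * gumbelPDF (log (exp a + exp b)) x := by
  have hs : 0 < exp a + exp b := by positivity
  rw [gumbelPDF_eq_mul_gumbelCDF, gumbelPDF_eq_mul_gumbelCDF, exp_log hs,
    ← gumbelCDF_mul_gumbelCDF]
  field_simp

theorem integral_gumbelCDF_mul_gumbelPDF (a b : ℝ) :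
    ∫ x, gumbelCDF a x * gumbelPDF b x = exp b / (exp a + exp b) := by
  simp_rw [gumbelCDF_mul_gumbelPDF, integral_const_mul, integral_gumbelPDF, mul_one]

/-- For every `p ∈ (0,1)`, the integral over `ℝ` of the product of the `Gumbel(log (1-p), 1)`
CDF and the `Gumbel(log p, 1)` density equals `p`. -/
theorem gumbel_cdf_density_integral (p : ℝ) (hp0 : 0 < p) (hp1 : p < 1) :
    ∫ x : ℝ, Real.exp (-Real.exp (-(x - Real.log (1 - p)))) *
        Real.exp (-(x - Real.log p) - Real.exp (-(x - Real.log p))) = p := by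
  change ∫ x, gumbelCDF (log (1 - p)) x * gumbelPDF (log p) x = p
  rw [integral_gumbelCDF_mul_gumbelPDF, exp_log (sub_pos.2 hp1), exp_log hp0]
  ring
end

section
/- Let V be a real normed vector space, let μ1, μ2 ∈ V, and let p, q, p', q' be positive real numbers. Define the first-layer expected representations h1 = (p/(p+q))·μ1 + (q/(p+q))·μ2 and h2 = (q/(p+q))·μ1 + (p/(p+q))·μ2. Define the original second-layer representations g1 = (p/(p+q))·h1 + (q/(p+q))·h2, g2 = (q/(p+q))·h1 + (p/(p+q))·h2, and the rewired second-layer representations g1' = (p'/(p'+q'))·h1 + (q'/(p'+q'))·h2, g2' = (q'/(p'+q'))·h1 + (p'/(p'+q'))·h2. If p ≠ q, then ‖g1' - g2'‖ = (|p' - q'|/(p' + q')) · ((p + q)/|p - q|) · ‖g1 - g2‖. -/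
/-!
Both second-layer maps send the pair `(h1, h2)` to a pair whose difference is
`((a - b) / (a + b)) • (h1 - h2)`, with `(a, b) = (p, q)` without rewiring and `(p', q')` with it.
Hence both distances are multiples of `‖h1 - h2‖`, and dividing one factor by the other gives the
ratio; `p ≠ q` makes the original factor nonzero.
-/

theorem smul_add_smul_sub_smul_add_smul {R E : Type*} [Ring R] [AddCommGroup E] [Module R E]
    (a b : R) (x y : E) : (a • x + b • y) - (b • x + a • y) = (a - b) • (x - y) := by
  rw [smul_sub, sub_smul, sub_smul]
  abel

theorem div_add_smul_add_div_add_smul_sub {K E : Type*} [DivisionRing K] [AddCommGroup E]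
    [Module K E] (a b : K) (x y : E) :
    ((a / (a + b)) • x + (b / (a + b)) • y) - ((b / (a + b)) • x + (a / (a + b)) • y)
      = ((a - b) / (a + b)) • (x - y) := by
  rw [smul_add_smul_sub_smul_add_smul, sub_div]

theorem norm_div_smul_of_pos {V : Type*} [NormedAddCommGroup V] [NormedSpace ℝ V]
    {a b : ℝ} (hb : 0 < b) (v : V) : ‖(a / b) • v‖ = |a| / b * ‖v‖ := by
  rw [norm_smul, Real.norm_eq_abs, abs_div, abs_of_pos hb]

theorem csbm_rewired_dist_general {V : Type*} [NormedAddCommGroup V] [NormedSpace ℝ V]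
    (p q p' q' : ℝ) (hp : 0 < p) (hq : 0 < q) (hp' : 0 < p') (hq' : 0 < q')
    (hpq : p ≠ q)
    (h1 h2 g1 g2 g1' g2' : V)
    (hg1 : g1 = (p / (p + q)) • h1 + (q / (p + q)) • h2)
    (hg2 : g2 = (q / (p + q)) • h1 + (p / (p + q)) • h2)
    (hg1' : g1' = (p' / (p' + q')) • h1 + (q' / (p' + q')) • h2)
    (hg2' : g2' = (q' / (p' + q')) • h1 + (p' / (p' + q')) • h2) :
    ‖g1' - g2'‖ = (|p' - q'| / (p' + q')) * ((p + q) / |p - q|) * ‖g1 - g2‖ := by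
  have hpq_pos : 0 < p + q := add_pos hp hq
  have hpq_pos' : 0 < p' + q' := add_pos hp' hq'
  have hdist : ‖g1 - g2‖ = |p - q| / (p + q) * ‖h1 - h2‖ := by
    rw [hg1, hg2, div_add_smul_add_div_add_smul_sub, norm_div_smul_of_pos hpq_pos]
  have hdist' : ‖g1' - g2'‖ = |p' - q'| / (p' + q') * ‖h1 - h2‖ := by
    rw [hg1', hg2', div_add_smul_add_div_add_smul_sub, norm_div_smul_of_pos hpq_pos']
  have habs : |p - q| ≠ 0 := abs_ne_zero.mpr (sub_ne_zero.mpr hpq)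
  rw [hdist, hdist']
  field_simp

/-- Rewiring the second layer with new intra/inter-class probabilities `p'`, `q'` scales the
expected distance between the two class centroids:
`‖g1' - g2'‖ = (|p' - q'| / (p' + q')) * ((p + q) / |p - q|) * ‖g1 - g2‖` when `p ≠ q`. -/
theorem csbm_rewired_dist {V : Type*} [NormedAddCommGroup V] [NormedSpace ℝ V]
    (μ1 μ2 : V) (p q p' q' : ℝ) (hp : 0 < p) (hq : 0 < q) (hp' : 0 < p') (hq' : 0 < q')
    (hpq : p ≠ q)
    (h1 h2 g1 g2 g1' g2' : V)
    (hh1 : h1 = (p / (p + q)) • μ1 + (q / (p + q)) • μ2)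
    (hh2 : h2 = (q / (p + q)) • μ1 + (p / (p + q)) • μ2)
    (hg1 : g1 = (p / (p + q)) • h1 + (q / (p + q)) • h2)
    (hg2 : g2 = (q / (p + q)) • h1 + (p / (p + q)) • h2)
    (hg1' : g1' = (p' / (p' + q')) • h1 + (q' / (p' + q')) • h2)
    (hg2' : g2' = (q' / (p' + q')) • h1 + (p' / (p' + q')) • h2) :
    ‖g1' - g2'‖ = (|p' - q'| / (p' + q')) * ((p + q) / |p - q|) * ‖g1 - g2‖ :=
  csbm_rewired_dist_general p q p' q' hp hq hp' hq' hpq h1 h2 g1 g2 g1' g2' hg1 hg2 hg1' hg2'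
end
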